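/- arXiv:2001.06655 — 2 statements merged into one kernel-verified Lean document; each statement's English description precedes it below -/
import Mathlib

section
/- For a > 1 and x ≥ 0, lim_{n→∞} (n/2)·S*_{n,a}((t−x)²; x) = x/2. -/
open Real Filter

noncomputable def szasz (a : ℝ) (n : ℕ) (f : ℝ → ℝ) (x : ℝ) : ℝ :=
  ∑' k : ℕ, a ^ (-x / (a ^ ((1:ℝ)/n) - 1)) *
    (x * Real.log a) ^ k / ((a ^ ((1:ℝ)/n) - 1) ^ k * (Nat.factorial k : ℝ)) * f (k / n)

/-!
At `x` the weights of `S*_{n,a}` are the Poisson weights `e^{-c} c^k / k!` with parameter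
`c = x log a / (a^{1/n} - 1)`, evaluated at the nodes `k / n`; the Poisson mean `c` and variance `c`
give `S*_{n,a}((t - x)²; x) = (c/n - x)² + c/n²`. Writing `L = log a` and
`u_n = n (a^{1/n} - 1) = n (e^{L/n} - 1)`, we have `c/n = x L / u_n` and `|u_n - L| ≤ L²/n`, so
`(n/2) S*_{n,a}((t - x)²; x) = x² n (u_n - L)² / (2 u_n²) + x L / (2 u_n) → x L / (2 L) = x / 2`.
-/

open Topology Nat

lemma hasSum_pow_div_factorial (c : ℝ) : HasSum (fun k : ℕ => c ^ k / k !) (exp c) := by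
  rw [exp_eq_exp_ℝ]
  exact NormedSpace.expSeries_div_hasSum_exp c

-- `(k + 1) c^(k+1) / (k + 1)! = c · c^k / k!`: the factor `k` absorbs one factorial.
lemma HasSum.natCast_mul_pow_div_factorial {f : ℕ → ℝ} {c s : ℝ}
    (h : HasSum (fun k => f (k + 1) * (c ^ k / k !)) s) :
    HasSum (fun k : ℕ => k * f k * (c ^ k / k !)) (c * s) := by
  refine (hasSum_nat_add_iff' 1).mp ?_
  rw [Finset.sum_range_one, Nat.cast_zero, zero_mul, zero_mul, sub_zero]
  refine (h.mul_left c).congr_fun fun k => ?_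
  rw [factorial_succ]
  push_cast
  field_simp
  ring

lemma hasSum_natCast_mul_pow_div_factorial (c : ℝ) :
    HasSum (fun k : ℕ => k * (c ^ k / k !)) (c * exp c) :=
  (((hasSum_pow_div_factorial c).congr_fun fun k => one_mul _).natCast_mul_pow_div_factorial
    (f := fun _ => 1)).congr_fun fun k => by simp

lemma hasSum_natCast_sq_mul_pow_div_factorial (c : ℝ) :
    HasSum (fun k : ℕ => (k : ℝ) ^ 2 * (c ^ k / k !)) ((c ^ 2 + c) * exp c) := by
  have h := (hasSum_natCast_mul_pow_div_factorial c).add (hasSum_pow_div_factorial c)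
  convert (h.congr_fun fun k => ?_).natCast_mul_pow_div_factorial (f := fun k => k) using 1
  · ext k
    ring
  · ring
  · push_cast
    ring

-- `E[(K/m - x)²] = (E[K/m] - x)² + Var(K/m)` for `K ~ Poisson(c)`.
lemma hasSum_poisson_div_sub_sq (c m x : ℝ) :
    HasSum (fun k : ℕ => exp (-c) * c ^ k / k ! * ((k : ℝ) / m - x) ^ 2)
      ((c / m - x) ^ 2 + c / m ^ 2) := by
  have h := ((((hasSum_natCast_sq_mul_pow_div_factorial c).div_const (m ^ 2)).sub
    ((hasSum_natCast_mul_pow_div_factorial c).mul_left (2 * x / m))).add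
    ((hasSum_pow_div_factorial c).mul_left (x ^ 2))).mul_left (exp (-c))
  have hv : exp (-c) * ((c ^ 2 + c) * exp c / m ^ 2 - 2 * x / m * (c * exp c) + x ^ 2 * exp c) =
      (c / m - x) ^ 2 + c / m ^ 2 := by
    have he : exp (-c) * exp c = 1 := by rw [← exp_add, neg_add_cancel, exp_zero]
    linear_combination ((c ^ 2 + c) / m ^ 2 - 2 * x / m * c + x ^ 2) * he
  exact hv ▸ h.congr_fun fun k => by ring

lemma szasz_sq_sub_eq {a : ℝ} (ha : 0 < a) (n : ℕ) (x : ℝ) :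
    szasz a n (fun t => (t - x) ^ 2) x =
      (x * log a / (a ^ ((1:ℝ)/n) - 1) / n - x) ^ 2 + x * log a / (a ^ ((1:ℝ)/n) - 1) / n ^ 2 := by
  refine Eq.trans (tsum_congr fun k => ?_) (hasSum_poisson_div_sub_sq _ n x).tsum_eq
  rw [rpow_def_of_pos ha, div_pow]
  ring_nf

lemma abs_mul_exp_div_sub_one_sub_le {t s : ℝ} (h : |t| ≤ s) :
    |s * (exp (t / s) - 1) - t| ≤ t ^ 2 / s := by
  rcases (abs_nonneg t).trans h |>.eq_or_lt with hs | hs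
  · subst hs
    simp [abs_nonpos_iff.1 h]
  have hts : |t / s| ≤ 1 := by
    rw [abs_div, abs_of_pos hs]
    exact div_le_one_of_le₀ h hs.le
  calc |s * (exp (t / s) - 1) - t| = s * |exp (t / s) - 1 - t / s| := by
        rw [← abs_of_pos hs, ← abs_mul, abs_of_pos hs]
        congr 1
        field_simp
    _ ≤ s * (t / s) ^ 2 := by gcongr; exact abs_exp_sub_one_sub_id_le hts
    _ = t ^ 2 / s := by field_simp

lemma eventually_abs_natCast_mul_exp_div_sub_one_sub_le (t : ℝ) :
    ∀ᶠ n : ℕ in atTop, |n * (exp (t / n) - 1) - t| ≤ t ^ 2 / n := by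
  filter_upwards [eventually_ge_atTop ⌈|t|⌉₊] with n hn
  exact abs_mul_exp_div_sub_one_sub_le (Nat.ceil_le.1 hn)

lemma tendsto_natCast_mul_exp_div_sub_one (t : ℝ) :
    Tendsto (fun n : ℕ => n * (exp (t / n) - 1)) atTop (𝓝 t) := by
  rw [← tendsto_sub_nhds_zero_iff]
  exact squeeze_zero_norm' (eventually_abs_natCast_mul_exp_div_sub_one_sub_le t)
    (tendsto_const_div_atTop_nhds_zero_nat _)

lemma tendsto_natCast_mul_sq_of_abs_le_div {d : ℕ → ℝ} {C : ℝ}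
    (h : ∀ᶠ n in atTop, |d n| ≤ C / n) : Tendsto (fun n : ℕ => n * d n ^ 2) atTop (𝓝 0) := by
  refine squeeze_zero' (Eventually.of_forall fun n => by positivity) ?_
    (tendsto_const_div_atTop_nhds_zero_nat (C ^ 2))
  filter_upwards [h] with n hn
  calc (n : ℝ) * d n ^ 2 = n * |d n| ^ 2 := by rw [sq_abs]
    _ ≤ n * (C / n) ^ 2 := by gcongr
    _ ≤ C ^ 2 / n := by
      rcases n.eq_zero_or_pos with rfl | hn
      · simp
      · field_simp; rfl

theorem stmt_14_general (a : ℝ) (ha : 1 < a) (x : ℝ) :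
    Filter.Tendsto (fun n : ℕ => (n : ℝ) / 2 * szasz a n (fun t => (t - x) ^ 2) x)
      Filter.atTop (nhds (x / 2)) := by
  set L := log a with hL_def
  have hL : 0 < L := log_pos ha
  set u : ℕ → ℝ := fun n => n * (exp (L / n) - 1)
  have hu : Tendsto u atTop (𝓝 L) := tendsto_natCast_mul_exp_div_sub_one L
  have herr : Tendsto (fun n => n * (u n - L) ^ 2) atTop (𝓝 0) :=
    tendsto_natCast_mul_sq_of_abs_le_div (eventually_abs_natCast_mul_exp_div_sub_one_sub_le L)
  have hlim := ((herr.const_mul (x ^ 2)).div ((hu.pow 2).const_mul 2) (by positivity)).add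
    ((tendsto_const_nhds (x := x * L)).div (hu.const_mul 2) (by positivity))
  convert hlim.congr' ?_ using 2
  · field_simp
    ring
  filter_upwards [eventually_gt_atTop 0] with n hn
  have hn' : (0 : ℝ) < n := Nat.cast_pos.2 hn
  have hb : 0 < exp (L / n) - 1 := by simp only [sub_pos, one_lt_exp_iff]; positivity
  rw [szasz_sq_sub_eq (by positivity), rpow_def_of_pos (by positivity), mul_one_div]
  simp only [Pi.div_apply, u, ← hL_def]
  field_simp
  ring

theorem stmt_14 (a : ℝ) (ha : 1 < a) (x : ℝ) (hx : 0 ≤ x) :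
    Filter.Tendsto (fun n : ℕ => (n : ℝ) / 2 * szasz a n (fun t => (t - x) ^ 2) x)
      Filter.atTop (nhds (x / 2)) :=
  stmt_14_general a ha x
end

section
/- For the Kantorovich-type operators, one has the identities: S̃*_{n,a}(e_0; x) = 1, S̃*_{n,a}(e_1; x) = 1/(2n) + x·log(a)/((a^(1/n)−1)·n), and S̃*_{n,a}(e_2; x) = 1/(3n²) + 2x·log(a)/((a^(1/n)−1)·n²) + x²(log a)²/((a^(1/n)−1)²·n²), for all x ≥ 0. -/
/-!
Writing `y = x log a / (a^(1/n) - 1)`, the weight `a^(-x/(a^(1/n)-1))` equals `exp (-y)`, so the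
operator averages `n ∫_{k/n}^{(k+1)/n} f` against the Poisson weights `exp (-y) y^k / k!`.
For `f = e₀, e₁, e₂` these integrals are quadratic polynomials in `k`, and the Poisson factorial
moments `∑ k(k-1)⋯(k-j+1) y^k / k! = y^j exp y` evaluate the resulting sums.
-/

open Real
open scoped Nat

noncomputable def kant (a : ℝ) (n : ℕ) (f : ℝ → ℝ) (x : ℝ) : ℝ :=
  (n : ℝ) * ∑' k : ℕ, a ^ (-x / (a ^ ((1:ℝ)/n) - 1)) *
    (x * Real.log a) ^ k / ((a ^ ((1:ℝ)/n) - 1) ^ k * (Nat.factorial k : ℝ)) *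
    ∫ t in ((k : ℝ)/n)..(((k : ℝ) + 1)/n), f t

theorem hasSum_descFactorial_mul_pow_div_factorial (y : ℝ) (j : ℕ) :
    HasSum (fun k : ℕ => (k.descFactorial j : ℝ) * y ^ k / k !) (y ^ j * exp y) := by
  induction j with
  | zero => simpa [exp_eq_exp_ℝ] using NormedSpace.expSeries_div_hasSum_exp y
  | succ j ih =>
    rw [← hasSum_nat_add_iff' 1, Finset.sum_range_one, Nat.zero_descFactorial_succ, Nat.cast_zero,
      zero_mul, zero_div, sub_zero, pow_succ', mul_assoc]
    refine (ih.mul_left y).congr_fun fun k => ?_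
    rw [Nat.succ_descFactorial_succ, Nat.factorial_succ]
    push_cast
    field_simp
    ring

theorem hasSum_pow_div_factorial_mul_quadratic (y c₀ c₁ c₂ : ℝ) :
    HasSum (fun k : ℕ => y ^ k / k ! * (c₀ + c₁ * k + c₂ * k ^ 2))
      ((c₀ + c₁ * y + c₂ * (y ^ 2 + y)) * exp y) := by
  have h₀ := hasSum_descFactorial_mul_pow_div_factorial y 0
  have h₁ := hasSum_descFactorial_mul_pow_div_factorial y 1
  have h₂ := hasSum_descFactorial_mul_pow_div_factorial y 2
  rw [show (c₀ + c₁ * y + c₂ * (y ^ 2 + y)) * exp y =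
    c₀ * (y ^ 0 * exp y) + (c₁ + c₂) * (y ^ 1 * exp y) + c₂ * (y ^ 2 * exp y) by ring]
  refine (((h₀.mul_left c₀).add (h₁.mul_left (c₁ + c₂))).add (h₂.mul_left c₂)).congr_fun
    fun k => ?_
  rw [Nat.descFactorial_zero, Nat.descFactorial_one, Nat.cast_descFactorial_two]
  push_cast
  ring

theorem kant_eq_of_integral_eq_quadratic {a : ℝ} (ha : 0 < a) {n : ℕ} {f : ℝ → ℝ}
    {c₀ c₁ c₂ : ℝ} (x : ℝ)
    (hf : ∀ k : ℕ, ∫ t in (k : ℝ) / n..((k : ℝ) + 1) / n, f t = c₀ + c₁ * k + c₂ * k ^ 2) :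
    let y := x * log a / (a ^ ((1:ℝ) / n) - 1)
    kant a n f x = n * (c₀ + c₁ * y + c₂ * (y ^ 2 + y)) := by
  intro y
  have hterm : ∀ k : ℕ, a ^ (-x / (a ^ ((1:ℝ) / n) - 1)) * (x * log a) ^ k /
      ((a ^ ((1:ℝ) / n) - 1) ^ k * k !) * ∫ t in (k : ℝ) / n..((k : ℝ) + 1) / n, f t =
      exp (-y) * (y ^ k / k ! * (c₀ + c₁ * k + c₂ * k ^ 2)) := by
    intro k
    rw [hf, rpow_def_of_pos ha, div_pow, div_div]
    simp only [y]
    ring_nf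
  rw [kant, tsum_congr hterm, tsum_mul_left,
    (hasSum_pow_div_factorial_mul_quadratic y c₀ c₁ c₂).tsum_eq, mul_left_comm (exp _),
    ← exp_add, neg_add_cancel, exp_zero, mul_one]

theorem integral_one_div_nat {n : ℕ} (hn : n ≠ 0) (k : ℝ) :
    ∫ _ in k / n..(k + 1) / n, (1 : ℝ) = 1 / n := by
  rw [intervalIntegral.integral_const, smul_eq_mul, mul_one]
  field_simp
  ring

theorem integral_id_div_nat {n : ℕ} (hn : n ≠ 0) (k : ℝ) :
    ∫ t in k / n..(k + 1) / n, t = 1 / (2 * n ^ 2) + 1 / n ^ 2 * k := by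
  rw [integral_id]
  field_simp
  ring

theorem integral_sq_div_nat {n : ℕ} (hn : n ≠ 0) (k : ℝ) :
    ∫ t in k / n..(k + 1) / n, t ^ 2 = 1 / (3 * n ^ 3) + 1 / n ^ 3 * k + 1 / n ^ 3 * k ^ 2 := by
  rw [integral_pow]
  norm_num
  field_simp
  ring

theorem stmt_17_general (a : ℝ) (ha : 1 < a) (n : ℕ) (hn : 1 ≤ n) (x : ℝ) :
    kant a n (fun _ => (1:ℝ)) x = 1 ∧
    kant a n (fun t => t) x =
      1 / (2 * n) + x * Real.log a / ((a ^ ((1:ℝ)/n) - 1) * n) ∧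
    kant a n (fun t => t ^ 2) x =
      1 / (3 * n ^ 2) + 2 * x * Real.log a / ((a ^ ((1:ℝ)/n) - 1) * n ^ 2)
        + x ^ 2 * Real.log a ^ 2 / ((a ^ ((1:ℝ)/n) - 1) ^ 2 * n ^ 2) := by
  have ha₀ : 0 < a := one_pos.trans ha
  have hn₀ : n ≠ 0 := Nat.one_le_iff_ne_zero.mp hn
  have hb : a ^ ((1:ℝ) / n) - 1 ≠ 0 := (sub_pos.mpr (one_lt_rpow ha (by positivity))).ne'
  refine ⟨?_, ?_, ?_⟩
  · refine (kant_eq_of_integral_eq_quadratic (c₀ := 1 / n) (c₁ := 0) (c₂ := 0) ha₀ x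
      fun k => ?_).trans ?_
    · rw [integral_one_div_nat hn₀]; ring
    · simp [hn₀]
  · refine (kant_eq_of_integral_eq_quadratic (c₀ := 1 / (2 * n ^ 2)) (c₁ := 1 / n ^ 2) (c₂ := 0)
      ha₀ x fun k => ?_).trans ?_
    · rw [integral_id_div_nat hn₀]; ring
    · field_simp
      ring
  · refine (kant_eq_of_integral_eq_quadratic ha₀ x (integral_sq_div_nat hn₀ ·)).trans ?_
    field_simp
    ring

theorem stmt_17 (a : ℝ) (ha : 1 < a) (n : ℕ) (hn : 1 ≤ n) (x : ℝ) (hx : 0 ≤ x) :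
    kant a n (fun _ => (1:ℝ)) x = 1 ∧
    kant a n (fun t => t) x =
      1 / (2 * n) + x * Real.log a / ((a ^ ((1:ℝ)/n) - 1) * n) ∧
    kant a n (fun t => t ^ 2) x =
      1 / (3 * n ^ 2) + 2 * x * Real.log a / ((a ^ ((1:ℝ)/n) - 1) * n ^ 2)
        + x ^ 2 * Real.log a ^ 2 / ((a ^ ((1:ℝ)/n) - 1) ^ 2 * n ^ 2) :=
  stmt_17_general a ha n hn x
end
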